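/- arXiv:1511.07464 — 2 statements merged into one kernel-verified Lean document; each statement's English description precedes it below -/
import Mathlib

section
/- For an irreducible stochastic matrix p on a finite state space with invariant measure μ satisfying the uniform geometric convergence |p^k g − μ(g)| ≤ ζ θ^k v pointwise for ‖g‖_v ≤ 1, the operator B := Σ_{k=0}^∞ (p^k − 1⊗μ) is well-defined on the space of functions with finite v-norm, has operator v-norm at most ζ/(1−θ), and for any probability measure μ* on X, the identity μ* − μ = (μ* − μ* p) B holds. -/
/-!
The geometric bound, tested on indicator functions, makes `Σ_k (p^k - 1⊗μ)` converge entrywise,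
and applied termwise it bounds the `v`-norm of the sum by `ζ Σ_k θ^k = ζ / (1 - θ)`.
Since the rows of `p` sum to one, `ν := μ* - μ* p` has total mass zero, so `ν (1⊗μ) = 0` and
`ν (p^k - 1⊗μ) = μ* p^k - μ* p^(k+1)`: the series telescopes to `μ* - lim_k μ* p^k`, and this limit
is `μ* (1⊗μ) = μ` because the terms `p^k - 1⊗μ` of a convergent series tend to zero.
-/

open Matrix BigOperators

open Filter Topology

section Summation

variable {ι m n R : Type*} [NonUnitalNonAssocSemiring R] [TopologicalSpace R]
  [IsTopologicalSemiring R]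

theorem HasSum.matrix_vecMul [Fintype m] {f : ι → Matrix m n R} {a : Matrix m n R}
    (hf : HasSum f a) (w : m → R) : HasSum (fun i => w ᵥ* f i) (w ᵥ* a) :=
  hf.map ({ toFun := (w ᵥ* ·), map_zero' := vecMul_zero w, map_add' := (vecMul_add · · w) } :
      Matrix m n R →+ n → R) (continuous_const.matrix_vecMul continuous_id)

theorem HasSum.matrix_mulVec [Fintype n] {f : ι → Matrix m n R} {a : Matrix m n R}
    (hf : HasSum f a) (g : n → R) : HasSum (fun i => f i *ᵥ g) (a *ᵥ g) :=
  hf.map (mulVec.addMonoidHomLeft g) (continuous_id.matrix_mulVec continuous_const)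

end Summation

theorem HasSum.eq_sub_of_tendsto {E : Type*} [AddCommGroup E] [TopologicalSpace E]
    [IsTopologicalAddGroup E] [T2Space E] {f : ℕ → E} {a l : E}
    (ha : HasSum (fun k => f k - f (k + 1)) a) (hf : Tendsto f atTop (𝓝 l)) :
    a = f 0 - l := by
  refine tendsto_nhds_unique ha.tendsto_sum_nat ?_
  simp_rw [Finset.sum_range_sub']
  exact tendsto_const_nhds.sub hf

namespace Matrix

theorem vecMul_replicateRow {m n R : Type*} [Fintype m] [NonUnitalNonAssocSemiring R]
    (w : m → R) (μ : n → R) : w ᵥ* replicateRow m μ = (∑ b, w b) • μ := by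
  ext c
  simp [vecMul, dotProduct, Finset.sum_mul]

variable {X : Type*} [Fintype X]

/-- `‖A‖_v ≤ r` for the operator norm of the weighted sup norm `‖g‖_v = max_b |g b| / v b`. -/
def WeightedOpNormLE (v : X → ℝ) (A : Matrix X X ℝ) (r : ℝ) : Prop :=
  ∀ g : X → ℝ, (∀ b, |g b| ≤ v b) → ∀ b, |(A *ᵥ g) b| ≤ r * v b

section WeightedOpNorm

variable [DecidableEq X] {v : X → ℝ}

theorem WeightedOpNormLE.abs_apply_le {A : Matrix X X ℝ} {r : ℝ} (hA : WeightedOpNormLE v A r)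
    (hv : ∀ b, 1 ≤ v b) (b c : X) : |A b c| ≤ r * v b := by
  have hsingle : ∀ d, |(Pi.single c (1 : ℝ) : X → ℝ) d| ≤ v d := by
    intro d
    rcases eq_or_ne d c with rfl | hdc
    · simpa using hv d
    · simpa [hdc] using zero_le_one.trans (hv d)
  simpa [mulVec_single_one] using hA _ hsingle b

variable {M : ℕ → Matrix X X ℝ} {ζ θ : ℝ}

theorem summable_of_weightedOpNormLE_geometric (hv : ∀ b, 1 ≤ v b) (hθ0 : 0 ≤ θ) (hθ1 : θ < 1)
    (hM : ∀ k, WeightedOpNormLE v (M k) (ζ * θ ^ k)) : Summable M := by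
  have hgeom : Summable fun k => ζ * θ ^ k := (summable_geometric_of_lt_one hθ0 hθ1).mul_left ζ
  refine Pi.summable.mpr fun b => Pi.summable.mpr fun c => ?_
  exact Summable.of_norm_bounded (hgeom.mul_right (v b)) fun k => (hM k).abs_apply_le hv b c

theorem weightedOpNormLE_tsum_of_geometric (hv : ∀ b, 1 ≤ v b) (hθ0 : 0 ≤ θ) (hθ1 : θ < 1)
    (hM : ∀ k, WeightedOpNormLE v (M k) (ζ * θ ^ k)) :
    WeightedOpNormLE v (∑' k, M k) (ζ / (1 - θ)) := by
  intro g hg b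
  have hbound : HasSum (fun k => ζ * θ ^ k * v b) (ζ / (1 - θ) * v b) := by
    simpa only [div_eq_mul_inv] using
      ((hasSum_geometric_of_lt_one hθ0 hθ1).mul_left ζ).mul_right (v b)
  have hB : HasSum (fun k => (M k *ᵥ g) b) (((∑' k, M k) *ᵥ g) b) :=
    Pi.hasSum.mp ((summable_of_weightedOpNormLE_geometric hv hθ0 hθ1 hM).hasSum.matrix_mulVec g) b
  rw [← hB.tsum_eq]
  exact tsum_of_norm_bounded hbound fun k => (Real.norm_eq_abs _).trans_le (hM k g hg b)

end WeightedOpNorm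

section FundamentalKernel

variable {p : Matrix X X ℝ}

theorem sum_vecMul_of_mulVec_one (hp : p *ᵥ 1 = 1) (w : X → ℝ) :
    ∑ c, (w ᵥ* p) c = ∑ c, w c := by
  simpa [dotProduct_one, hp] using (dotProduct_mulVec w p 1).symm

theorem vecMul_tsum_pow_sub_replicateRow [DecidableEq X] (hp : p *ᵥ 1 = 1) {μ : X → ℝ}
    (hS : Summable fun k => p ^ k - replicateRow X μ) (w : X → ℝ) :
    (w - w ᵥ* p) ᵥ* ∑' k, (p ^ k - replicateRow X μ) = w - (∑ b, w b) • μ := by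
  have hterm : ∀ k,
      (w - w ᵥ* p) ᵥ* (p ^ k - replicateRow X μ) = w ᵥ* p ^ k - w ᵥ* p ^ (k + 1) := by
    intro k
    rw [vecMul_sub, vecMul_replicateRow, sub_vecMul, vecMul_vecMul, ← pow_succ']
    simp [Finset.sum_sub_distrib, sum_vecMul_of_mulVec_one hp]
  have hdecay : Tendsto (fun k => w ᵥ* (p ^ k - replicateRow X μ)) atTop (𝓝 0) := by
    have hcont : Continuous fun M : Matrix X X ℝ => w ᵥ* M :=
      continuous_const.matrix_vecMul continuous_id
    simpa only [Function.comp_def, vecMul_zero] using (hcont.tendsto 0).comp hS.tendsto_atTop_zero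
  have hlim : Tendsto (fun k => w ᵥ* p ^ k) atTop (𝓝 ((∑ b, w b) • μ)) := by
    simpa [vecMul_sub, vecMul_replicateRow] using hdecay.add_const ((∑ b, w b) • μ)
  have hsum := hS.hasSum.matrix_vecMul (w - w ᵥ* p)
  simp only [hterm] at hsum
  simpa using hsum.eq_sub_of_tendsto hlim

end FundamentalKernel

end Matrix

theorem fundamental_kernel_identity_general {X : Type*} [Fintype X] [DecidableEq X]
    (p : Matrix X X ℝ)
    (hp_row : ∀ b, ∑ c, p b c = 1)
    (μ : X → ℝ)
    (v : X → ℝ) (hv : ∀ b, 1 ≤ v b)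
    (ζ θ : ℝ) (hθ : θ ∈ Set.Ioo (0:ℝ) 1)
    (hgeom : ∀ g : X → ℝ, (∀ b, |g b| ≤ v b) → ∀ k : ℕ, ∀ b,
      |((p ^ k).mulVec g) b - ∑ c, μ c * g c| ≤ ζ * θ ^ k * v b) :
    Summable (fun k : ℕ => p ^ k - Matrix.of (fun (_ b : X) => μ b)) ∧
    ∀ B : Matrix X X ℝ, B = (∑' k : ℕ, (p ^ k - Matrix.of (fun (_ b : X) => μ b))) →
      (∀ g : X → ℝ, (∀ b, |g b| ≤ v b) → ∀ b, |(B.mulVec g) b| ≤ ζ / (1 - θ) * v b) ∧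
      (∀ μstar : X → ℝ, (∀ b, 0 ≤ μstar b) → ∑ b, μstar b = 1 →
        (fun b => μstar b - μ b) =
          Matrix.vecMul (fun b => μstar b - (Matrix.vecMul μstar p) b) B) := by
  have hnorm : ∀ k, WeightedOpNormLE v (p ^ k - replicateRow X μ) (ζ * θ ^ k) := by
    intro k g hg b
    simpa only [sub_mulVec, Pi.sub_apply, replicateRow_mulVec_eq_const,
      Function.const_apply, dotProduct] using hgeom g hg k b
  have hS := summable_of_weightedOpNormLE_geometric hv hθ.1.le hθ.2 hnorm
  have hp : p *ᵥ 1 = 1 := funext fun b => by simpa [mulVec, dotProduct] using hp_row b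
  refine ⟨hS, ?_⟩
  rintro B rfl
  refine ⟨weightedOpNormLE_tsum_of_geometric hv hθ.1.le hθ.2 hnorm, fun μstar _ hμstar => ?_⟩
  have h := vecMul_tsum_pow_sub_replicateRow hp hS μstar
  rw [hμstar, one_smul] at h
  exact h.symm

/-- For an irreducible stochastic matrix `p` with invariant probability measure `μ`
satisfying the uniform geometric convergence `|p^k g - μ(g)| ≤ ζ θ^k v` for `‖g‖_v ≤ 1`,
the operator `B = Σ_k (p^k - 1⊗μ)` is well-defined, has `v`-operator norm at most
`ζ/(1-θ)`, and for any probability measure `μ*`, `μ* - μ = (μ* - μ* p) B`. -/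
theorem fundamental_kernel_identity {X : Type*} [Fintype X] [Nonempty X] [DecidableEq X]
    (p : Matrix X X ℝ)
    (hp_nonneg : ∀ b c, 0 ≤ p b c) (hp_row : ∀ b, ∑ c, p b c = 1)
    (hp_irred : ∀ b c, ∃ k : ℕ, 0 < (p ^ k) b c)
    (μ : X → ℝ) (hμ_nonneg : ∀ b, 0 ≤ μ b) (hμ_sum : ∑ b, μ b = 1)
    (hμ_inv : Matrix.vecMul μ p = μ)
    (v : X → ℝ) (hv : ∀ b, 1 ≤ v b)
    (ζ θ : ℝ) (hζ : 0 < ζ) (hθ : θ ∈ Set.Ioo (0:ℝ) 1)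
    (hgeom : ∀ g : X → ℝ, (∀ b, |g b| ≤ v b) → ∀ k : ℕ, ∀ b,
      |((p ^ k).mulVec g) b - ∑ c, μ c * g c| ≤ ζ * θ ^ k * v b) :
    Summable (fun k : ℕ => p ^ k - Matrix.of (fun (_ b : X) => μ b)) ∧
    ∀ B : Matrix X X ℝ, B = (∑' k : ℕ, (p ^ k - Matrix.of (fun (_ b : X) => μ b))) →
      (∀ g : X → ℝ, (∀ b, |g b| ≤ v b) → ∀ b, |(B.mulVec g) b| ≤ ζ / (1 - θ) * v b) ∧
      (∀ μstar : X → ℝ, (∀ b, 0 ≤ μstar b) → ∑ b, μstar b = 1 →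
        (fun b => μstar b - μ b) =
          Matrix.vecMul (fun b => μstar b - (Matrix.vecMul μstar p) b) B) :=
  fundamental_kernel_identity_general p hp_row μ v hv ζ θ hθ hgeom
end

section
/- Suppose P is a Markov kernel with drift PV ≤ λ V + κ 1_C for V ≥ 1, λ ∈ (0,1), κ > 0, and suppose an allotment with representative map a(·) satisfies V(a(x)) ≤ (1+δ)V(x) for all x, with (1+δ)λ < 1. Define the finite-state kernel on representatives by p v(a_j) := Σ_i V(a_i) P(a_j, J_i) = ∫ V(a(y)) P(a_j, dy). If additionally P has the Metropolis-Hastings form P(x,dy) = α(x,y)q(x,y)dy + r(x)δ_x(dy), then p v(a_j) ≤ (1+δ) λ v(a_j) + (1+δ) κ 1_C(a_j) for every representative a_j, where v(a_j) = V(a_j). -/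
open MeasureTheory BigOperators

/-- Drift condition transfer to the finite-state approximating chain: if `P` satisfies
`PV ≤ λ V + κ 1_C`, the representative map `a(·)` satisfies `V(a(x)) ≤ (1+δ) V(x)` with
`(1+δ)λ < 1`, and `P` has the Metropolis-Hastings form, then
`p v(a_j) = ∫ V(a(y)) P(a_j, dy) ≤ (1+δ) λ V(a_j) + (1+δ) κ 1_C(a_j)` for every
representative `a_j`. -/
theorem finite_chain_drift {d : ℕ} {m : ℕ}
    (P : EuclideanSpace ℝ (Fin d) → Measure (EuclideanSpace ℝ (Fin d)))
    (hP : ∀ x, IsProbabilityMeasure (P x))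
    (V : EuclideanSpace ℝ (Fin d) → ℝ) (hVmeas : Measurable V) (hV1 : ∀ x, 1 ≤ V x)
    (C : Set (EuclideanSpace ℝ (Fin d))) (hC : MeasurableSet C)
    (lam kap : ℝ) (hlam : lam ∈ Set.Ioo (0:ℝ) 1) (hkap : 0 < kap)
    (hIntV : ∀ x, Integrable V (P x))
    (hdrift : ∀ x, ∫ y, V y ∂(P x) ≤ lam * V x + kap * C.indicator (fun _ => (1:ℝ)) x)
    (J : Fin (m + 1) → Set (EuclideanSpace ℝ (Fin d)))
    (a : Fin (m + 1) → EuclideanSpace ℝ (Fin d)) (ha : ∀ j, a j ∈ J j)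
    (amap : EuclideanSpace ℝ (Fin d) → EuclideanSpace ℝ (Fin d))
    (hamap : ∀ j, ∀ x ∈ J j, amap x = a j)
    (hamapmeas : Measurable (V ∘ amap))
    (hIntVa : ∀ x, Integrable (fun y => V (amap y)) (P x))
    (δ : ℝ) (hδ : 0 ≤ δ) (hδlam : (1 + δ) * lam < 1)
    (hmesh : ∀ x, V (amap x) ≤ (1 + δ) * V x)
    (α : EuclideanSpace ℝ (Fin d) → EuclideanSpace ℝ (Fin d) → ℝ)
    (q : EuclideanSpace ℝ (Fin d) → EuclideanSpace ℝ (Fin d) → ℝ)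
    (r : EuclideanSpace ℝ (Fin d) → ℝ)
    (hMH : ∀ x, P x =
      (volume.withDensity fun y => ENNReal.ofReal (α x y * q x y)) +
        ENNReal.ofReal (r x) • Measure.dirac x) :
    ∀ j : Fin (m + 1),
      ∫ y, V (amap y) ∂(P (a j)) ≤
        (1 + δ) * lam * V (a j) + (1 + δ) * kap * C.indicator (fun _ => (1:ℝ)) (a j) := by
  intro j
  have h1 : ∫ y, V (amap y) ∂(P (a j)) ≤ ∫ y, (1 + δ) * V y ∂(P (a j)) :=
    integral_mono (hIntVa _) ((hIntV _).const_mul _) fun y => hmesh y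
  rw [integral_const_mul] at h1
  have h2 := mul_le_mul_of_nonneg_left (hdrift (a j)) (by linarith : (0:ℝ) ≤ 1 + δ)
  calc ∫ y, V (amap y) ∂(P (a j)) ≤ (1 + δ) * ∫ y, V y ∂(P (a j)) := h1
    _ ≤ (1 + δ) * (lam * V (a j) + kap * C.indicator (fun _ => (1:ℝ)) (a j)) := h2
    _ = (1 + δ) * lam * V (a j) + (1 + δ) * kap * C.indicator (fun _ => (1:ℝ)) (a j) := by ring
end
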